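/- arXiv:2210.09596 — 6 statements merged into one kernel-verified Lean document; each statement's English description precedes it below -/
import Mathlib

section
/- Let C be a nonempty convex subset of a real Banach space X with 0 ∈ C, and let [C] denote the closed linear span of C in X. Then a point x ∈ C is a non-proper support point of C in X if and only if x is a nonsupport point of C regarded as a subset of the Banach space [C]; that is, C_{NP} = C_{N,[C]}. -/
/-!
A proper support functional `f` of `C` at `x` restricts to a nonzero support functional on
`[C]`, since it takes two different values on `C ⊆ [C]`. Conversely, a nonzero support
functional `g` on `[C]` extends by Hahn–Banach to `f` on `X`. If `f` were constant on `C`,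
then, as `0 ∈ C`, it would vanish on `C`, hence on the closed subspace `[C]`, forcing `g = 0`.
-/

theorem ContinuousLinearMap.comp_subtypeL_topologicalClosure_span_eq_zero
    {R M M₂ : Type*} [Ring R] [TopologicalSpace M] [AddCommGroup M] [Module R M]
    [ContinuousConstSMul R M] [ContinuousAdd M] [TopologicalSpace M₂] [T1Space M₂]
    [AddCommGroup M₂] [Module R M₂] {s : Set M} (f : M →L[R] M₂) (hf : ∀ y ∈ s, f y = 0) :
    f.comp (Submodule.span R s).topologicalClosure.subtypeL = 0 := by
  have hker : (Submodule.span R s).topologicalClosure ≤ LinearMap.ker (f : M →ₗ[R] M₂) :=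
    Submodule.topologicalClosure_minimal _ (Submodule.span_le.mpr hf) f.isClosed_ker
  ext z
  exact hker z.2

theorem stmt_2_general {X : Type*} [NormedAddCommGroup X] [NormedSpace ℝ X]
    (C : Set X) (h0 : (0 : X) ∈ C)
    (x : X) (hx : x ∈ C) :
    (¬ ∃ f : X →L[ℝ] ℝ, (∀ y ∈ C, f y ≤ f x) ∧ ∃ y ∈ C, f y < f x) ↔
      ¬ ∃ g : (Submodule.span ℝ C).topologicalClosure →L[ℝ] ℝ, g ≠ 0 ∧
        ∀ y, ∀ hy : y ∈ C,
          g ⟨y, (Submodule.span ℝ C).le_topologicalClosure (Submodule.subset_span hy)⟩ ≤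
            g ⟨x, (Submodule.span ℝ C).le_topologicalClosure (Submodule.subset_span hx)⟩ := by
  set S := (Submodule.span ℝ C).topologicalClosure
  rw [not_iff_not]
  constructor
  · rintro ⟨f, hle, y, hy, hlt⟩
    refine ⟨f.comp S.subtypeL, fun hzero => ?_, fun z hz => hle z hz⟩
    have hfC : ∀ z (hz : z ∈ C), f z = 0 := fun z hz =>
      congr($hzero ⟨z, (Submodule.span ℝ C).le_topologicalClosure (Submodule.subset_span hz)⟩)
    exact hlt.ne ((hfC y hy).trans (hfC x hx).symm)
  · rintro ⟨g, hg0, hgle⟩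
    obtain ⟨f, hfg, -⟩ := exists_extension_norm_eq S g
    have hle : ∀ y ∈ C, f y ≤ f x := fun y hy => by
      simpa only [← hfg] using hgle y hy
    refine ⟨f, hle, ?_⟩
    by_contra! hge
    have hfC : ∀ y ∈ C, f y = 0 := fun y hy => by
      have hx0 : f x = 0 := le_antisymm (by simpa using hge 0 h0) (by simpa using hle 0 h0)
      exact hx0 ▸ le_antisymm (hle y hy) (hge y hy)
    apply hg0
    ext z
    simpa [← hfg] using congr($(f.comp_subtypeL_topologicalClosure_span_eq_zero hfC) z)

/-- For a nonempty convex set `C` with `0 ∈ C` in a real Banach space `X`, a point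
`x ∈ C` is a non-proper support point of `C` (in `X`) iff it is a nonsupport point of
`C` regarded as a subset of the closed linear span `[C]` of `C`. -/
theorem stmt_2 {X : Type*} [NormedAddCommGroup X] [NormedSpace ℝ X] [CompleteSpace X]
    (C : Set X) (hconv : Convex ℝ C) (h0 : (0 : X) ∈ C)
    (x : X) (hx : x ∈ C) :
    (¬ ∃ f : X →L[ℝ] ℝ, (∀ y ∈ C, f y ≤ f x) ∧ ∃ y ∈ C, f y < f x) ↔
      ¬ ∃ g : (Submodule.span ℝ C).topologicalClosure →L[ℝ] ℝ, g ≠ 0 ∧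
        ∀ y, ∀ hy : y ∈ C,
          g ⟨y, (Submodule.span ℝ C).le_topologicalClosure (Submodule.subset_span hy)⟩ ≤
            g ⟨x, (Submodule.span ℝ C).le_topologicalClosure (Submodule.subset_span hx)⟩ :=
  stmt_2_general C h0 x hx
end

section
/- Let C be a closed reproducing cone (C − C = X) with vertex at the origin of a real Banach space X containing no nontrivial linear subspaces (C ∩ (−C) = {0}), with C_N ≠ ∅, and let u, v ∈ C_N. With [−w,w] = (C − w) ∩ (w − C), X_w = ⋃_{λ>0} λ[−w,w] and ‖x‖_w = inf{λ > 0 : x ∈ λ[−w,w]} for w ∈ {u, v}, the following are equivalent: (i) X_u = X_v as subsets of X; (ii) there is a constant c ≥ 1 such that v − c⁻¹u ∈ C and cu − v ∈ C (i.e., c⁻¹u ≤ v ≤ cu in the cone order); (iii) X_u = X_v and there is a constant c ≥ 1 with c⁻¹‖x‖_u ≤ ‖x‖_v ≤ c‖x‖_u for every x ∈ X_u. -/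
open scoped Pointwise

/-- The `(C,w)`-generating set `X_w = ⋃_{λ>0} λ((C − w) ∩ (w − C))`. -/
def coneGenSet {X : Type*} [NormedAddCommGroup X] [NormedSpace ℝ X] (C : Set X) (w : X) :
    Set X :=
  ⋃ (l : ℝ) (_ : 0 < l), l • ((C - {w}) ∩ ({w} - C))

/-- The Minkowski gauge `‖·‖_w` of the order interval `[−w,w] = (C − w) ∩ (w − C)`. -/
noncomputable def coneGenGauge {X : Type*} [NormedAddCommGroup X] [NormedSpace ℝ X]
    (C : Set X) (w : X) (x : X) : ℝ :=
  sInf {l : ℝ | 0 < l ∧ x ∈ l • ((C - {w}) ∩ ({w} - C))}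

section Aux

variable {X : Type*} [NormedAddCommGroup X] [NormedSpace ℝ X] {C : Set X}

private lemma aux_mem_sub_singleton {A : Set X} {w x : X} : x ∈ A - {w} ↔ x + w ∈ A := by
  rw [Set.sub_singleton, Set.mem_image]
  constructor
  · rintro ⟨y, hy, rfl⟩; simpa using hy
  · intro h; exact ⟨x + w, h, by abel⟩

private lemma aux_mem_singleton_sub {A : Set X} {w x : X} : x ∈ {w} - A ↔ w - x ∈ A := by
  rw [Set.singleton_sub, Set.mem_image]
  constructor
  · rintro ⟨y, hy, rfl⟩; simpa using hy
  · intro h; exact ⟨w - x, h, sub_sub_cancel w x⟩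

private lemma aux_smul_mem_iff (hsmul : ∀ x ∈ C, ∀ r : ℝ, 0 ≤ r → r • x ∈ C)
    {r : ℝ} (hr : 0 < r) {y : X} : r • y ∈ C ↔ y ∈ C := by
  constructor
  · intro h
    have := hsmul _ h r⁻¹ (by positivity)
    rwa [inv_smul_smul₀ hr.ne'] at this
  · intro h; exact hsmul _ h r hr.le

private lemma aux_mem_smul_I (hsmul : ∀ x ∈ C, ∀ r : ℝ, 0 ≤ r → r • x ∈ C)
    {w x : X} {l : ℝ} (hl : 0 < l) :
    x ∈ l • ((C - {w}) ∩ ({w} - C)) ↔ (l • w + x ∈ C ∧ l • w - x ∈ C) := by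
  rw [Set.mem_smul_set_iff_inv_smul_mem₀ hl.ne', Set.mem_inter_iff,
    aux_mem_sub_singleton, aux_mem_singleton_sub]
  constructor
  · rintro ⟨h1, h2⟩
    constructor
    · have := hsmul _ h1 l hl.le
      rw [smul_add, smul_inv_smul₀ hl.ne'] at this
      rwa [add_comm] at this
    · have := hsmul _ h2 l hl.le
      rwa [smul_sub, smul_inv_smul₀ hl.ne'] at this
  · rintro ⟨h1, h2⟩
    constructor
    · have := hsmul _ h1 l⁻¹ (by positivity)
      rw [smul_add, inv_smul_smul₀ hl.ne'] at this
      rwa [add_comm] at this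
    · have := hsmul _ h2 l⁻¹ (by positivity)
      rwa [smul_sub, inv_smul_smul₀ hl.ne'] at this

/-- If `c•a - b ∈ C` then `l•[-b,b] ⊆ (c*l)•[-a,a]`. -/
private lemma aux_move (hadd : ∀ x ∈ C, ∀ y ∈ C, x + y ∈ C)
    (hsmul : ∀ x ∈ C, ∀ r : ℝ, 0 ≤ r → r • x ∈ C)
    {c : ℝ} (hc : 0 < c) {a b x : X} {l : ℝ} (hl : 0 < l)
    (hab : c • a - b ∈ C)
    (hx : x ∈ l • ((C - {b}) ∩ ({b} - C))) :
    x ∈ (c * l) • ((C - {a}) ∩ ({a} - C)) := by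
  rw [aux_mem_smul_I hsmul hl] at hx
  rw [aux_mem_smul_I hsmul (mul_pos hc hl)]
  constructor
  · have := hadd _ (hsmul _ hab l hl.le) _ hx.1
    convert this using 1
    module
  · have := hadd _ (hsmul _ hab l hl.le) _ hx.2
    convert this using 1
    module

private lemma aux_gauge_le {w1 w2 x : X} {c : ℝ} (hc : 0 < c)
    (hx : ∃ l : ℝ, 0 < l ∧ x ∈ l • ((C - {w1}) ∩ ({w1} - C)))
    (h : ∀ l : ℝ, 0 < l → x ∈ l • ((C - {w1}) ∩ ({w1} - C)) →
      x ∈ (c * l) • ((C - {w2}) ∩ ({w2} - C))) :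
    coneGenGauge C w2 x ≤ c * coneGenGauge C w1 x := by
  unfold coneGenGauge
  set S1 := {l : ℝ | 0 < l ∧ x ∈ l • ((C - {w1}) ∩ ({w1} - C))} with hS1
  set S2 := {l : ℝ | 0 < l ∧ x ∈ l • ((C - {w2}) ∩ ({w2} - C))} with hS2
  have hne : S1.Nonempty := by obtain ⟨l, h1, h2⟩ := hx; exact ⟨l, h1, h2⟩
  have hbdd2 : BddBelow S2 := ⟨0, fun l hl => hl.1.le⟩
  have key : ∀ l ∈ S1, c⁻¹ * sInf S2 ≤ l := by
    intro l hl
    have h2 : c * l ∈ S2 := ⟨mul_pos hc hl.1, h l hl.1 hl.2⟩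
    have hle : sInf S2 ≤ c * l := csInf_le hbdd2 h2
    calc c⁻¹ * sInf S2 ≤ c⁻¹ * (c * l) :=
          mul_le_mul_of_nonneg_left hle (by positivity)
      _ = l := by field_simp
  have hfin : c⁻¹ * sInf S2 ≤ sInf S1 := le_csInf hne key
  calc sInf S2 = c * (c⁻¹ * sInf S2) := by field_simp
    _ ≤ c * sInf S1 := mul_le_mul_of_nonneg_left hfin hc.le

end Aux

/-- Equivalence theorem: for a closed reproducing pointed cone `C` of a real Banach
space and nonsupport points `u, v` of `C`, the following are equivalent:
(i) `X_u = X_v`; (ii) `c⁻¹u ≤ v ≤ cu` for some `c ≥ 1`; (iii) `X_u = X_v` and the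
norms `‖·‖_u`, `‖·‖_v` are equivalent with constant `c ≥ 1`. -/
theorem stmt_8 {X : Type*} [NormedAddCommGroup X] [NormedSpace ℝ X] [CompleteSpace X]
    (C : Set X) (hcl : IsClosed C) (hconv : Convex ℝ C)
    (hadd : ∀ x ∈ C, ∀ y ∈ C, x + y ∈ C)
    (hsmul : ∀ x ∈ C, ∀ r : ℝ, 0 ≤ r → r • x ∈ C)
    (hrep : C - C = Set.univ)
    (hpointed : C ∩ (-C) = {0})
    (u v : X) (hu : u ∈ C) (hv : v ∈ C)
    (hun : ¬ ∃ f : X →L[ℝ] ℝ, f ≠ 0 ∧ ∀ y ∈ C, f y ≤ f u)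
    (hvn : ¬ ∃ f : X →L[ℝ] ℝ, f ≠ 0 ∧ ∀ y ∈ C, f y ≤ f v) :
    ((coneGenSet C u = coneGenSet C v) ↔
      (∃ c : ℝ, 1 ≤ c ∧ v - c⁻¹ • u ∈ C ∧ c • u - v ∈ C)) ∧
    ((∃ c : ℝ, 1 ≤ c ∧ v - c⁻¹ • u ∈ C ∧ c • u - v ∈ C) ↔
      (coneGenSet C u = coneGenSet C v ∧
        ∃ c : ℝ, 1 ≤ c ∧ ∀ x ∈ coneGenSet C u,
          c⁻¹ * coneGenGauge C u x ≤ coneGenGauge C v x ∧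
            coneGenGauge C v x ≤ c * coneGenGauge C u x)) := by
  have h0 : (0 : X) ∈ C := by simpa using hsmul u hu 0 le_rfl
  have memX : ∀ (w x : X), x ∈ coneGenSet C w ↔
      ∃ l : ℝ, 0 < l ∧ x ∈ l • ((C - {w}) ∩ ({w} - C)) := by
    intro w x
    simp only [coneGenSet, Set.mem_iUnion, exists_prop]
  have self_mem : ∀ w ∈ C, w ∈ coneGenSet C w := by
    intro w hw
    rw [memX]
    refine ⟨1, one_pos, ?_⟩
    rw [aux_mem_smul_I hsmul one_pos]
    constructor
    · rw [one_smul]; exact hadd _ hw _ hw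
    · rw [one_smul, sub_self]; exact h0
  -- (i) ⇒ (ii)
  have fwd : coneGenSet C u = coneGenSet C v →
      ∃ c : ℝ, 1 ≤ c ∧ v - c⁻¹ • u ∈ C ∧ c • u - v ∈ C := by
    intro heq
    have hvu : v ∈ coneGenSet C u := by rw [heq]; exact self_mem v hv
    have huv : u ∈ coneGenSet C v := by rw [← heq]; exact self_mem u hu
    obtain ⟨a, ha, h1⟩ := (memX u v).mp hvu
    rw [aux_mem_smul_I hsmul ha] at h1
    obtain ⟨b, hb, h2⟩ := (memX v u).mp huv
    rw [aux_mem_smul_I hsmul hb] at h2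
    refine ⟨max 1 (max a b), le_max_left _ _, ?_, ?_⟩
    · -- v - c⁻¹ • u ∈ C, using b • v - u ∈ C i.e. v - b⁻¹ • u ∈ C
      set c := max 1 (max a b) with hc
      have hc0 : 0 < c := lt_of_lt_of_le one_pos (le_max_left _ _)
      have hbc : b ≤ c := le_trans (le_max_right a b) (le_max_right _ _)
      have hinv : c⁻¹ ≤ b⁻¹ := by
        apply inv_anti₀ hb hbc
      have hvb : v - b⁻¹ • u ∈ C := by
        have := hsmul _ h2.2 b⁻¹ (by positivity)
        rwa [smul_sub, smul_smul, inv_mul_cancel₀ hb.ne', one_smul] at this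
      have := hadd _ hvb _ (hsmul u hu (b⁻¹ - c⁻¹) (by linarith))
      convert this using 1
      module
    · set c := max 1 (max a b) with hc
      have hac : a ≤ c := le_trans (le_max_left a b) (le_max_right _ _)
      have := hadd _ h1.2 _ (hsmul u hu (c - a) (by linarith))
      convert this using 1
      module
  -- (ii) ⇒ (i) and gauge equivalence
  have bwd : ∀ c : ℝ, 1 ≤ c → v - c⁻¹ • u ∈ C → c • u - v ∈ C →
      coneGenSet C u = coneGenSet C v ∧
        ∀ x ∈ coneGenSet C u,
          c⁻¹ * coneGenGauge C u x ≤ coneGenGauge C v x ∧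
            coneGenGauge C v x ≤ c * coneGenGauge C u x := by
    intro c hc1 hvc hcu
    have hc0 : 0 < c := lt_of_lt_of_le one_pos hc1
    have hcv : c • v - u ∈ C := by
      have := hsmul _ hvc c hc0.le
      rwa [smul_sub, smul_smul, mul_inv_cancel₀ hc0.ne', one_smul] at this
    have hset : coneGenSet C u = coneGenSet C v := by
      ext x
      rw [memX, memX]
      constructor
      · rintro ⟨l, hl, hx⟩
        exact ⟨c * l, mul_pos hc0 hl, aux_move hadd hsmul hc0 hl hcv hx⟩
      · rintro ⟨l, hl, hx⟩
        exact ⟨c * l, mul_pos hc0 hl, aux_move hadd hsmul hc0 hl hcu hx⟩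
    refine ⟨hset, ?_⟩
    intro x hx
    have hxu : ∃ l : ℝ, 0 < l ∧ x ∈ l • ((C - {u}) ∩ ({u} - C)) := (memX u x).mp hx
    have hxv : ∃ l : ℝ, 0 < l ∧ x ∈ l • ((C - {v}) ∩ ({v} - C)) :=
      (memX v x).mp (hset ▸ hx)
    have g1 : coneGenGauge C v x ≤ c * coneGenGauge C u x :=
      aux_gauge_le hc0 hxu (fun l hl hxl => aux_move hadd hsmul hc0 hl hcv hxl)
    have g2 : coneGenGauge C u x ≤ c * coneGenGauge C v x :=
      aux_gauge_le hc0 hxv (fun l hl hxl => aux_move hadd hsmul hc0 hl hcu hxl)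
    refine ⟨?_, g1⟩
    calc c⁻¹ * coneGenGauge C u x ≤ c⁻¹ * (c * coneGenGauge C v x) :=
          mul_le_mul_of_nonneg_left g2 (by positivity)
      _ = coneGenGauge C v x := by field_simp
  constructor
  · constructor
    · exact fwd
    · rintro ⟨c, hc1, hvc, hcu⟩
      exact (bwd c hc1 hvc hcu).1
  · constructor
    · rintro ⟨c, hc1, hvc, hcu⟩
      obtain ⟨hset, hg⟩ := bwd c hc1 hvc hcu
      exact ⟨hset, c, hc1, hg⟩
    · rintro ⟨hset, -⟩
      exact fwd hset
end

section
/- Let 1 ≤ p < ∞ and let ℓ_p^+ = {x ∈ ℓ_p : x(n) ≥ 0 for all n ∈ ℕ} be the positive cone of the real sequence space ℓ_p. Then the set of nonsupport points of ℓ_p^+ equals {x ∈ ℓ_p : x(n) > 0 for all n ∈ ℕ}. -/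
open scoped ENNReal

/-!
If some coordinate `x i` vanishes, minus the `i`-th coordinate functional attains its maximum `0`
over the cone at `x`. Conversely, a functional attaining its maximum over a cone does so with value
zero (compare `0` and `2 • x`); when every `x i` is positive, both `lp.single i 1` and
`x - lp.single i (x i)` lie in the cone, which forces the functional to vanish on every
`lp.single i 1`, hence everywhere by density of finitely supported sequences (`p < ∞`).
-/

theorem LinearMap.apply_eq_zero_of_isMaxOn {𝕜 E : Type*} [CommRing 𝕜] [LinearOrder 𝕜]
    [IsStrictOrderedRing 𝕜] [AddCommGroup E] [Module 𝕜 E] {C : Set E} {x : E} (f : E →ₗ[𝕜] 𝕜)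
    (h₀ : 0 ∈ C) (h₂ : (2 : 𝕜) • x ∈ C) (hmax : IsMaxOn f C x) : f x = 0 := by
  have hle₀ := isMaxOn_iff.1 hmax 0 h₀
  have hle₂ := isMaxOn_iff.1 hmax _ h₂
  rw [map_zero] at hle₀
  rw [map_smul, smul_eq_mul] at hle₂
  linarith

namespace lp

variable {ι : Type*} {p : ℝ≥0∞}

theorem single_one_nonneg [DecidableEq ι] (i j : ι) :
    0 ≤ lp.single (E := fun _ : ι => ℝ) p i (1 : ℝ) j := by
  rw [lp.single_apply]
  exact (Pi.single_nonneg.2 zero_le_one : (0 : ι → ℝ) ≤ Pi.single i 1) j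

theorem sub_single_apply_nonneg [DecidableEq ι] {x : lp (fun _ : ι => ℝ) p}
    (hx : ∀ j, 0 ≤ x j) (i j : ι) : 0 ≤ (x - lp.single p i (x i) : lp (fun _ : ι => ℝ) p) j := by
  rcases eq_or_ne j i with rfl | hji
  · simp
  · simpa [Pi.single_eq_of_ne hji] using hx j

variable [Fact (1 ≤ p)]

theorem neg_evalCLM_ne_zero (i : ι) : -lp.evalCLM ℝ (fun _ : ι => ℝ) p i ≠ 0 := by
  classical
  intro h
  have := congrArg (fun f => f (lp.single p i 1)) h
  simp [lp.evalCLM] at this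

theorem eq_zero_of_isMaxOn_of_pos (hp : p ≠ ∞) {x : lp (fun _ : ι => ℝ) p} (hx : ∀ i, 0 < x i)
    (f : lp (fun _ : ι => ℝ) p →L[ℝ] ℝ) (hmax : IsMaxOn f {y | ∀ i, 0 ≤ y i} x) : f = 0 := by
  classical
  have hfx : f x = 0 :=
    f.toLinearMap.apply_eq_zero_of_isMaxOn (C := {y | ∀ i, 0 ≤ y i}) (fun _ => le_rfl)
      (fun i => mul_nonneg zero_le_two (hx i).le) hmax
  have hsingle (i : ι) : f (lp.single p i 1) = 0 := by
    have hle : f (lp.single p i 1) ≤ 0 := hfx ▸ isMaxOn_iff.1 hmax _ (single_one_nonneg i)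
    have hge : 0 ≤ x i * f (lp.single p i 1) := by
      have := isMaxOn_iff.1 hmax _ (sub_single_apply_nonneg (fun j => (hx j).le) i)
      rwa [map_sub, sub_le_self_iff, ← mul_one (x i), ← smul_eq_mul, lp.single_smul, map_smul,
        smul_eq_mul] at this
    exact le_antisymm hle ((mul_nonneg_iff_of_pos_left (hx i)).1 hge)
  refine lp.ext_continuousLinearMap hp fun i => ContinuousLinearMap.ext_ring ?_
  simpa [lp.singleContinuousLinearMap_apply] using hsingle i

end lp

/-- For `1 ≤ p < ∞`, the set of nonsupport points of the positive cone
`ℓ_p^+ = {x ∈ ℓ_p : x(n) ≥ 0 ∀ n}` is `{x ∈ ℓ_p : x(n) > 0 ∀ n}`. -/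
theorem stmt_9 (p : ℝ≥0∞) [Fact (1 ≤ p)] (hp : p ≠ ∞) :
    {x ∈ {y : lp (fun _ : ℕ => ℝ) p | ∀ n, 0 ≤ y n} |
        ¬ ∃ f : lp (fun _ : ℕ => ℝ) p →L[ℝ] ℝ, f ≠ 0 ∧
          ∀ y ∈ {y : lp (fun _ : ℕ => ℝ) p | ∀ n, 0 ≤ y n}, f y ≤ f x} =
      {x : lp (fun _ : ℕ => ℝ) p | ∀ n, 0 < x n} := by
  ext x
  simp only [Set.mem_ofPred_eq]
  constructor
  · rintro ⟨hx, hnonsupport⟩ n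
    refine (hx n).lt_of_ne fun hxn => hnonsupport ⟨_, lp.neg_evalCLM_ne_zero n, fun y hy => ?_⟩
    simpa [lp.evalCLM, ← hxn] using hy n
  · intro hx
    refine ⟨fun n => (hx n).le, fun ⟨f, hf, hmax⟩ => hf ?_⟩
    exact lp.eq_zero_of_isMaxOn_of_pos hp hx f (isMaxOn_iff.2 hmax)
end

section
/- Let c₀ be the Banach space of real sequences converging to 0 with the supremum norm, and let u ∈ c₀ satisfy u(n) > 0 for all n ∈ ℕ. Then: (i) u is a nonsupport point of the positive cone c₀^+ = {x ∈ c₀ : x(n) ≥ 0 for all n}; (ii) with X_u = {x ∈ c₀ : there exists M > 0 with |x(n)| ≤ M·u(n) for all n} and ‖x‖_u = inf{λ > 0 : |x(n)| ≤ λ·u(n) for all n}, one has ‖x‖_u = sup_n |x(n)|/u(n) for every x ∈ X_u; (iii) for every bounded real sequence b, the sequence (b(n)·u(n))_n belongs to c₀, hence to X_u. Consequently T x = (x(n)/u(n))_n is a surjective linear isometry from (X_u, ‖·‖_u) onto ℓ∞. -/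
open scoped ZeroAtInfty ENNReal Filter Topology

open Filter in
private lemma u_tendsto (u : C₀(ℕ, ℝ)) : Tendsto u atTop (𝓝 0) := by
  have := u.zero_at_infty'
  rwa [cocompact_eq_cofinite, Nat.cofinite_eq_atTop] at this

open Filter in
noncomputable def myTrunc (x : C₀(ℕ, ℝ)) (N : ℕ) : C₀(ℕ, ℝ) :=
  ⟨⟨fun n => if n < N then x n else 0, continuous_of_discreteTopology⟩, by
    rw [cocompact_eq_cofinite, Nat.cofinite_eq_atTop]
    refine Tendsto.congr' ?_ (tendsto_const_nhds (x := (0:ℝ)))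
    filter_upwards [eventually_ge_atTop N] with n hn
    simp [Nat.not_lt.2 hn]⟩

@[simp] lemma myTrunc_apply (x : C₀(ℕ, ℝ)) (N n : ℕ) :
    myTrunc x N n = if n < N then x n else 0 := rfl

open Filter in
lemma norm_le_of_forall {g : C₀(ℕ, ℝ)} {C : ℝ} (hC : 0 ≤ C) (h : ∀ n, |g n| ≤ C) :
    ‖g‖ ≤ C := by
  rw [← ZeroAtInftyContinuousMap.norm_toBCF_eq_norm]
  exact (BoundedContinuousFunction.norm_le hC).2 h

open Filter in
lemma tendsto_myTrunc (x : C₀(ℕ, ℝ)) :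
    Tendsto (fun N => myTrunc x N) atTop (𝓝 x) := by
  rw [Metric.tendsto_atTop]
  intro ε hε
  obtain ⟨N, hN⟩ := (Metric.tendsto_atTop.1 (u_tendsto x)) (ε/2) (by positivity)
  refine ⟨N, fun n hn => ?_⟩
  have : ‖myTrunc x n - x‖ ≤ ε/2 := by
    refine norm_le_of_forall (by positivity) fun m => ?_
    by_cases hm : m < n
    · simp [hm]
      positivity
    · have : |x m| ≤ ε/2 := by
        have := hN m (hn.trans (Nat.not_lt.1 hm))
        rw [Real.dist_eq, sub_zero] at this
        exact this.le
      simpa [hm, abs_sub_comm] using this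
  calc dist (myTrunc x n) x = ‖myTrunc x n - x‖ := dist_eq_norm _ _
    _ ≤ ε/2 := this
    _ < ε := by linarith

set_option maxHeartbeats 800000 in
set_option synthInstance.maxHeartbeats 200000 in
/-- For `u ∈ c₀` with all coordinates strictly positive: (i) `u` is a nonsupport point
of the positive cone `c₀⁺`; (ii) on `X_u = {x ∈ c₀ : ∃ M > 0, |x(n)| ≤ M·u(n) ∀ n}` the
gauge `‖x‖_u = inf{λ > 0 : |x(n)| ≤ λ·u(n) ∀ n}` equals `sup_n |x(n)|/u(n)`;
(iii) for every bounded sequence `b`, `(b(n)·u(n))_n` converges to `0` (belongs to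
`c₀`) and hence to `X_u`; consequently `x ↦ (x(n)/u(n))_n` is a surjective linear
isometry from `(X_u, ‖·‖_u)` onto `ℓ∞`. -/
theorem stmt_11 (u : C₀(ℕ, ℝ)) (hu : ∀ n, 0 < u n) :
    ((u ∈ {y : C₀(ℕ, ℝ) | ∀ n, 0 ≤ y n}) ∧
      ¬ ∃ f : C₀(ℕ, ℝ) →L[ℝ] ℝ, f ≠ 0 ∧
        ∀ y ∈ {y : C₀(ℕ, ℝ) | ∀ n, 0 ≤ y n}, f y ≤ f u) ∧
    (∀ x ∈ {x : C₀(ℕ, ℝ) | ∃ M > (0 : ℝ), ∀ n, |x n| ≤ M * u n},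
      sInf {l : ℝ | 0 < l ∧ ∀ n, |x n| ≤ l * u n} = ⨆ n, |x n| / u n) ∧
    (∀ b : ℕ → ℝ, (∃ M : ℝ, ∀ n, |b n| ≤ M) →
      Filter.Tendsto (fun n => b n * u n) Filter.atTop (𝓝 (0 : ℝ))) ∧
    (∀ x ∈ {x : C₀(ℕ, ℝ) | ∃ M > (0 : ℝ), ∀ n, |x n| ≤ M * u n},
      Memℓp (fun n => x n / u n) ∞) ∧
    (∀ y : lp (fun _ : ℕ => ℝ) ∞,
      ∃ x ∈ {x : C₀(ℕ, ℝ) | ∃ M > (0 : ℝ), ∀ n, |x n| ≤ M * u n},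
        ∀ n, x n = y n * u n) := by
  have key3 : ∀ b : ℕ → ℝ, (∃ M : ℝ, ∀ n, |b n| ≤ M) →
      Filter.Tendsto (fun n => b n * u n) Filter.atTop (𝓝 (0 : ℝ)) := by
    rintro b ⟨M, hM⟩
    have hgu : Filter.Tendsto (fun n => M * u n) Filter.atTop (𝓝 (0:ℝ)) := by
      simpa using (u_tendsto u).const_mul M
    refine squeeze_zero_norm (fun n => ?_) hgu
    rw [Real.norm_eq_abs, abs_mul, abs_of_pos (hu n)]
    exact mul_le_mul_of_nonneg_right (hM n) (hu n).le
  refine ⟨⟨fun n => (hu n).le, ?_⟩, ?_, key3, ?_, ?_⟩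
  · rintro ⟨f, hf0, hf⟩
    have h0 : (0 : ℝ) ≤ f u := by simpa using hf 0 (fun n => le_refl 0)
    have hneg : ∀ y : C₀(ℕ, ℝ), (∀ n, 0 ≤ y n) → f y ≤ 0 := by
      intro y hy
      by_contra h
      push_neg at h
      set t : ℝ := (f u + 1) / f y with ht
      have htpos : 0 < t := div_pos (by linarith) h
      have : f (t • y) ≤ f u := hf (t • y) (fun n => by
        have : (t • y) n = t * y n := rfl
        rw [this]; exact mul_nonneg htpos.le (hy n))
      rw [map_smul, smul_eq_mul, ht, div_mul_cancel₀ _ (ne_of_gt h)] at this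
      linarith
    have hfu : f u = 0 := le_antisymm (hneg u fun n => (hu n).le) h0
    have htr : ∀ (x : C₀(ℕ, ℝ)) (N : ℕ), f (myTrunc x N) = 0 := by
      intro x N
      set y := myTrunc x N with hy
      obtain ⟨ε, hε, hεy⟩ : ∃ ε > 0, ∀ n, ε * |y n| ≤ u n := by
        set s := insert (1:ℝ) ((Finset.range N).image fun n => u n / (|x n| + 1)) with hs
        have hne : s.Nonempty := ⟨1, Finset.mem_insert_self _ _⟩
        refine ⟨s.min' hne, ?_, ?_⟩
        · apply (Finset.lt_min'_iff s hne).2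
          intro b hb
          rcases Finset.mem_insert.1 hb with rfl | hb
          · norm_num
          · obtain ⟨n, _, rfl⟩ := Finset.mem_image.1 hb
            have := hu n
            positivity
        · intro n
          by_cases hn : n < N
          · have h1 : s.min' hne ≤ u n / (|x n| + 1) :=
              Finset.min'_le _ _ (Finset.mem_insert_of_mem
                (Finset.mem_image.2 ⟨n, Finset.mem_range.2 hn, rfl⟩))
            have hy' : |y n| = |x n| := by simp [hy, hn]
            have hpos : (0:ℝ) < |x n| + 1 := by positivity
            calc s.min' hne * |y n| ≤ (u n / (|x n| + 1)) * (|x n| + 1) := by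
                  rw [hy']
                  exact mul_le_mul h1 (by linarith) (abs_nonneg _) (div_nonneg (hu n).le hpos.le)
              _ = u n := div_mul_cancel₀ _ (ne_of_gt hpos)
          · have : |y n| = 0 := by simp [hy, hn]
            rw [this, mul_zero]; exact (hu n).le
      have h1 : f (u + ε • y) ≤ 0 := by
        rw [← hfu]
        refine hf _ fun n => ?_
        have : (u + ε • y) n = u n + ε * y n := rfl
        rw [this]
        have := hεy n
        have := neg_abs_le (y n)
        nlinarith [abs_nonneg (y n), hε]
      have h2 : f (u - ε • y) ≤ 0 := by
        rw [← hfu]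
        refine hf _ fun n => ?_
        have : (u - ε • y) n = u n - ε * y n := rfl
        rw [this]
        have := hεy n
        have := le_abs_self (y n)
        nlinarith [hε]
      rw [map_add, map_smul, hfu, smul_eq_mul, zero_add] at h1
      rw [map_sub, map_smul, hfu, smul_eq_mul, zero_sub] at h2
      have hy1 : f y ≤ 0 := by by_contra h; push_neg at h; nlinarith
      have hy2 : 0 ≤ f y := by by_contra h; push_neg at h; nlinarith
      linarith
    apply hf0
    ext x
    have hc : Filter.Tendsto (fun N => f (myTrunc x N)) Filter.atTop (𝓝 (f x)) :=
      (f.continuous.tendsto x).comp (tendsto_myTrunc x)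
    have hc' : Filter.Tendsto (fun N => f (myTrunc x N)) Filter.atTop (𝓝 (0:ℝ)) := by
      simpa [htr x] using tendsto_const_nhds (x := (0:ℝ))
    simpa using tendsto_nhds_unique hc hc'
  · rintro x ⟨M, hM, hxM⟩
    have hb : BddAbove (Set.range fun n => |x n| / u n) := by
      refine ⟨M, ?_⟩
      rintro _ ⟨n, rfl⟩
      exact (div_le_iff₀ (hu n)).2 (hxM n)
    set S := ⨆ n, |x n| / u n with hS
    have hS0 : 0 ≤ S := Real.iSup_nonneg fun n => div_nonneg (abs_nonneg _) (hu n).le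
    have hset : {l : ℝ | 0 < l ∧ ∀ n, |x n| ≤ l * u n} = {l : ℝ | 0 < l ∧ S ≤ l} := by
      ext l
      simp only [Set.mem_setOf_eq]
      constructor
      · rintro ⟨hl, h⟩
        exact ⟨hl, ciSup_le fun n => (div_le_iff₀ (hu n)).2 (h n)⟩
      · rintro ⟨hl, h⟩
        exact ⟨hl, fun n => (div_le_iff₀ (hu n)).1 ((le_ciSup hb n).trans h)⟩
    rw [hset]
    by_cases hSpos : 0 < S
    · have : {l : ℝ | 0 < l ∧ S ≤ l} = Set.Ici S := by
        ext l
        simp only [Set.mem_setOf_eq, Set.mem_Ici]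
        exact ⟨fun h => h.2, fun h => ⟨lt_of_lt_of_le hSpos h, h⟩⟩
      rw [this, csInf_Ici]
    · have hS0' : S = 0 := le_antisymm (not_lt.1 hSpos) hS0
      have : {l : ℝ | 0 < l ∧ S ≤ l} = Set.Ioi 0 := by
        ext l
        simp only [Set.mem_setOf_eq, Set.mem_Ioi, hS0']
        exact ⟨fun h => h.1, fun h => ⟨h, h.le⟩⟩
      rw [this, csInf_Ioi, hS0']
  · rintro x ⟨M, hM, hxM⟩
    apply memℓp_infty
    refine ⟨M, ?_⟩
    rintro _ ⟨n, rfl⟩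
    show ‖x n / u n‖ ≤ M
    rw [Real.norm_eq_abs, abs_div, abs_of_pos (hu n)]
    exact (div_le_iff₀ (hu n)).2 (hxM n)
  · intro y
    have hyb : ∀ n, |(y : ℕ → ℝ) n| ≤ ‖y‖ := fun n => by
      simpa using lp.norm_apply_le_norm ENNReal.top_ne_zero y n
    refine ⟨⟨⟨fun n => y n * u n, continuous_of_discreteTopology⟩, ?_⟩,
      ⟨‖y‖ + 1, add_pos_of_nonneg_of_pos (norm_nonneg y) one_pos, fun n => ?_⟩, fun n => rfl⟩
    · rw [Filter.cocompact_eq_cofinite, Nat.cofinite_eq_atTop]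
      exact key3 _ ⟨‖y‖, hyb⟩
    · show |y n * u n| ≤ (‖y‖ + 1) * u n
      rw [abs_mul, abs_of_pos (hu n)]
      exact mul_le_mul_of_nonneg_right (by linarith [hyb n]) (hu n).le
end

section
/- Let (Ω, Σ, μ) be a σ-finite measure space and 1 ≤ p < ∞. Then: (i) the set of nonsupport points of the positive cone L_p^+(μ) = {f ∈ L_p(μ) : f ≥ 0 a.e.} equals {f ∈ L_p(μ) : f > 0 a.e.}, and in particular it is nonempty; (ii) for every u ∈ L_p(μ) with u > 0 a.e., setting X_u = {f ∈ L_p(μ) : there exists M > 0 with |f| ≤ M·u a.e.} and ‖f‖_u = inf{λ > 0 : |f| ≤ λ·u a.e.}, one has ‖f‖_u = ‖f/u‖_{L∞(μ)} for every f ∈ X_u, and for every g ∈ L∞(μ) the product g·u belongs to L_p(μ) and to X_u. Consequently f ↦ f/u is a surjective linear isometry from (X_u, ‖·‖_u) onto L∞(μ). -/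
open MeasureTheory Filter Topology
open scoped ENNReal NNReal

/-!
A functional `φ ≠ 0` that attains its maximum over the cone `L_p^+` at `f` satisfies `φ ≤ 0` on
the cone and `φ f = 0`. If `f > 0` a.e. the truncations `g ⊓ n • f` of any `g ≥ 0` converge to `g`
in `L_p` (dominated convergence, `p < ∞`), and `φ` vanishes on each of them because
`0 ≤ g ⊓ n • f ≤ n • f`; so `φ` vanishes on the cone, hence everywhere. If instead `f = 0` on a
set of positive measure, σ-finiteness gives a subset `B` of finite positive measure there, and
`g ↦ -∫_B g` supports the cone at `f`.

On `X_u` the condition `|f| ≤ l u` a.e. is `‖f / u‖_∞ ≤ l`, which identifies the gauge with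
`‖f / u‖_∞`; and `|g u| ≤ ‖g‖_∞ u` shows that `g u ∈ X_u` for `g ∈ L_∞`.
-/

def IsSupportPoint {E : Type*} [AddCommGroup E] [Module ℝ E] [TopologicalSpace E] (C : Set E)
    (x : E) : Prop :=
  ∃ φ : E →L[ℝ] ℝ, φ ≠ 0 ∧ ∀ y ∈ C, φ y ≤ φ x

section Dominated

variable {α ι E F : Type*} [MeasurableSpace α] {μ : Measure α} {p : ℝ≥0∞}
  [NormedAddCommGroup E] [NormedAddCommGroup F] {f : ι → α → E} {g : α → F}

lemma eLpNorm_indicator_le_of_dominated {i : ι} (hfg : ∀ᵐ a ∂μ, ‖f i a‖ ≤ ‖g a‖) (s : Set α) :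
    eLpNorm (s.indicator (f i)) p μ ≤ eLpNorm (s.indicator g) p μ := by
  refine eLpNorm_mono_ae ?_
  filter_upwards [hfg] with a ha
  by_cases hs : a ∈ s <;> simp [hs, ha]

lemma unifIntegrable_of_dominated (hp : 1 ≤ p) (hp' : p ≠ ∞) (hg : MemLp g p μ)
    (hfg : ∀ i, ∀ᵐ a ∂μ, ‖f i a‖ ≤ ‖g a‖) : UnifIntegrable f p μ := by
  intro ε hε
  obtain ⟨δ, hδ, hgδ⟩ := hg.eLpNorm_indicator_le hp hp' hε
  exact ⟨δ, hδ, fun i s hs hμs =>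
    (eLpNorm_indicator_le_of_dominated (hfg i) s).trans (hgδ s hs hμs)⟩

lemma unifTight_of_dominated (hp' : p ≠ ∞) (hg : MemLp g p μ)
    (hfg : ∀ i, ∀ᵐ a ∂μ, ‖f i a‖ ≤ ‖g a‖) : UnifTight f p μ := by
  intro ε hε
  obtain ⟨s, hgs⟩ := unifTight_const (ι := Unit) hp' hg hε
  exact ⟨s, hgs.1, fun i => (eLpNorm_indicator_le_of_dominated (hfg i) sᶜ).trans (hgs.2 ())⟩

theorem tendsto_eLpNorm_sub_of_dominated (hp : 1 ≤ p) (hp' : p ≠ ∞) {f : ℕ → α → E}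
    {f₀ : α → E} (hf : ∀ n, AEStronglyMeasurable (f n) μ) (hf₀ : MemLp f₀ p μ)
    (hg : MemLp g p μ) (hfg : ∀ n, ∀ᵐ a ∂μ, ‖f n a‖ ≤ ‖g a‖)
    (hlim : ∀ᵐ a ∂μ, Tendsto (fun n => f n a) atTop (𝓝 (f₀ a))) :
    Tendsto (fun n => eLpNorm (f n - f₀) p μ) atTop (𝓝 0) :=
  tendsto_Lp_of_tendsto_ae hp hp' hf hf₀ (unifIntegrable_of_dominated hp hp' hg hfg)
    (unifTight_of_dominated hp' hg hfg) hlim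

end Dominated

namespace MeasureTheory.Lp

variable {α : Type*} [MeasurableSpace α] {μ : Measure α} {p : ℝ≥0∞}

lemma coeFn_inf_smul (f g : Lp ℝ p μ) (c : ℝ) :
    ⇑(g ⊓ c • f) =ᵐ[μ] fun a => min (g a) (c * f a) := by
  filter_upwards [coeFn_inf g (c • f), coeFn_smul c f] with a h₁ h₂
  simp [h₁, h₂]

theorem exists_ae_pos [SigmaFinite μ] (hp₀ : p ≠ 0) (hp : p ≠ ∞) :
    ∃ f : Lp ℝ p μ, ∀ᵐ a ∂μ, 0 < f a := by
  obtain ⟨g, hg_pos, hg_meas, hg_int⟩ := exists_pos_lintegral_lt_of_sigmaFinite μ one_ne_zero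
  have hp_pos : 0 < p.toReal := ENNReal.toReal_pos hp₀ hp
  set h : α → ℝ := fun a => (g a ^ p.toReal⁻¹ : ℝ≥0)
  have hh : MemLp h p μ := by
    refine ⟨(hg_meas.pow_const _).coe_nnreal_real.aestronglyMeasurable, ?_⟩
    rw [eLpNorm_lt_top_iff_lintegral_rpow_enorm_lt_top hp₀ hp]
    convert hg_int.trans ENNReal.one_lt_top using 3 with a
    rw [NNReal.enorm_eq, ← ENNReal.coe_rpow_of_nonneg _ hp_pos.le, NNReal.rpow_inv_rpow hp_pos.ne']
  refine ⟨hh.toLp h, ?_⟩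
  filter_upwards [hh.coeFn_toLp] with a ha
  rw [ha]
  exact NNReal.coe_pos.2 (NNReal.rpow_pos (hg_pos a))

variable [Fact (1 ≤ p)]

theorem tendsto_inf_smul_of_ae_pos (hp : p ≠ ∞) {f g : Lp ℝ p μ} (hf : ∀ᵐ a ∂μ, 0 < f a)
    (hg : 0 ≤ g) : Tendsto (fun n : ℕ => g ⊓ (n : ℝ) • f) atTop (𝓝 g) := by
  rw [← coeFn_nonneg] at hg
  have hinf : ∀ᵐ a ∂μ, ∀ n : ℕ, (g ⊓ (n : ℝ) • f) a = min (g a) (n * f a) :=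
    ae_all_iff.2 fun n => coeFn_inf_smul f g n
  rw [tendsto_Lp_iff_tendsto_eLpNorm']
  refine tendsto_eLpNorm_sub_of_dominated Fact.out hp (fun n => Lp.aestronglyMeasurable _)
    (Lp.memLp g) (Lp.memLp g) (fun n => ?_) ?_
  · filter_upwards [hinf, hf, hg] with a ha hfa hga
    rw [ha, Real.norm_eq_abs, Real.norm_eq_abs, abs_of_nonneg (le_min hga (by positivity)),
      abs_of_nonneg hga]
    exact min_le_left _ _
  · filter_upwards [hinf, hf] with a ha hfa
    refine tendsto_const_nhds.congr' ?_
    filter_upwards [eventually_ge_atTop ⌈g a / f a⌉₊] with n hn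
    rw [ha, min_eq_left ((div_le_iff₀ hfa).1 ((Nat.le_ceil _).trans (by exact_mod_cast hn)))]

lemma exists_continuousLinearMap_eq_setIntegral {s : Set α} (hs : MeasurableSet s)
    (hμs : μ s ≠ ∞) : ∃ φ : Lp ℝ p μ →L[ℝ] ℝ, ∀ g, φ g = ∫ a in s, g a ∂μ := by
  have : Fact (1 ≤ p.conjExponent) := ⟨le_self_add⟩
  refine ⟨((ContinuousLinearMap.mul ℝ ℝ).lpPairing μ p p.conjExponent).flip
    (indicatorConstLp _ hs hμs 1), fun g => ?_⟩
  rw [ContinuousLinearMap.flip_apply, ContinuousLinearMap.lpPairing_eq_integral,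
    ← integral_indicator hs]
  refine integral_congr_ae ?_
  filter_upwards [indicatorConstLp_coeFn (p := p.conjExponent) (hs := hs) (hμs := hμs)
    (c := (1 : ℝ))] with a ha
  by_cases h : a ∈ s <;> simp [ha, h]

theorem eq_zero_of_nonpos_of_map_eq_zero (hp : p ≠ ∞) {φ : Lp ℝ p μ →L[ℝ] ℝ} {f : Lp ℝ p μ}
    (hf : ∀ᵐ a ∂μ, 0 < f a) (hφ : ∀ g, 0 ≤ g → φ g ≤ 0) (hφf : φ f = 0) : φ = 0 := by
  have hsmul (c : ℝ) (hc : 0 ≤ c) : 0 ≤ c • f := by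
    rw [← coeFn_nonneg]
    filter_upwards [coeFn_smul c f, hf] with a ha hfa
    simpa [ha] using mul_nonneg hc hfa.le
  have hcone (g : Lp ℝ p μ) (hg : 0 ≤ g) : φ g = 0 := by
    have htrunc (n : ℕ) : φ (g ⊓ (n : ℝ) • f) = 0 := by
      refine le_antisymm (hφ _ (le_inf hg (hsmul _ n.cast_nonneg))) ?_
      have := hφ _ (sub_nonneg.2 (inf_le_right : g ⊓ (n : ℝ) • f ≤ (n : ℝ) • f))
      rwa [map_sub, map_smul, hφf, smul_zero, zero_sub, neg_nonpos] at this
    have hlim := (φ.continuous.tendsto g).comp (tendsto_inf_smul_of_ae_pos hp hf hg)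
    simp only [Function.comp_def, htrunc] at hlim
    exact tendsto_nhds_unique hlim tendsto_const_nhds
  ext x
  rw [← posPart_sub_negPart x, map_sub, hcone _ (posPart_nonneg x), hcone _ (negPart_nonneg x)]
  simp

theorem not_isSupportPoint_of_ae_pos (hp : p ≠ ∞) {f : Lp ℝ p μ} (hf : ∀ᵐ a ∂μ, 0 < f a) :
    ¬ IsSupportPoint (Set.Ici 0) f := by
  rintro ⟨φ, hφ0, hφ⟩
  have hf0 : 0 ≤ f := (coeFn_nonneg f).1 (hf.mono fun _ h => h.le)
  have hφf : φ f = 0 := by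
    have h₀ := hφ 0 Set.self_mem_Ici
    have h₂ := hφ (2 • f) (nsmul_nonneg hf0 2)
    rw [map_zero] at h₀
    rw [map_nsmul, two_nsmul] at h₂
    linarith
  exact hφ0 (eq_zero_of_nonpos_of_map_eq_zero hp hf (fun g hg => hφf ▸ hφ g hg) hφf)

theorem isSupportPoint_of_not_ae_pos [SigmaFinite μ] {f : Lp ℝ p μ} (hf : 0 ≤ f)
    (hpos : ¬ ∀ᵐ a ∂μ, 0 < f a) : IsSupportPoint (Set.Ici 0) f := by
  rw [← coeFn_nonneg] at hf
  have hzero : 0 < μ {a | f a ≤ 0} := by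
    simpa [pos_iff_ne_zero, ae_iff] using hpos
  obtain ⟨s, hs, hsf, hμs, hμs_fin⟩ := Measure.exists_subset_measure_lt_top
    (measurableSet_le (Lp.stronglyMeasurable f).measurable measurable_const) hzero
  obtain ⟨φ, hφ⟩ := exists_continuousLinearMap_eq_setIntegral (p := p) hs hμs_fin.ne
  have hφf : φ f = 0 := by
    rw [hφ]
    refine setIntegral_eq_zero_of_ae_eq_zero ?_
    filter_upwards [hf] with a ha has
    exact le_antisymm (hsf has) ha
  refine ⟨-φ, fun h => ?_, fun g hg => ?_⟩
  · have := congrArg (· (indicatorConstLp p hs hμs_fin.ne (1 : ℝ))) h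
    simp only [neg_apply, hφ, setIntegral_indicatorConstLp hs hs, Set.inter_self, smul_eq_mul,
      mul_one, zero_apply, neg_eq_zero] at this
    exact (ENNReal.toReal_pos hμs.ne' hμs_fin.ne).ne' this
  · rw [neg_apply, neg_apply, hφf, neg_zero, hφ, neg_nonpos]
    exact setIntegral_nonneg_of_ae_restrict (ae_restrict_of_ae ((coeFn_nonneg g).2 hg))

end MeasureTheory.Lp

section Gauge

variable {α : Type*} [MeasurableSpace α] {μ : Measure α} {f u : α → ℝ}

lemma ae_abs_le_mul_iff_eLpNorm_div_le (hu : ∀ᵐ a ∂μ, 0 < u a) {l : ℝ} (hl : 0 ≤ l) :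
    (∀ᵐ a ∂μ, |f a| ≤ l * u a) ↔ eLpNorm (fun a => f a / u a) ∞ μ ≤ ENNReal.ofReal l := by
  have hdiv : ∀ᵐ a ∂μ, (|f a| ≤ l * u a ↔ ‖f a / u a‖ ≤ l) := by
    filter_upwards [hu] with a ha
    rw [Real.norm_eq_abs, abs_div, abs_of_pos ha, div_le_iff₀ ha]
  rw [eLpNorm_exponent_top]
  constructor
  · intro h
    refine eLpNormEssSup_le_of_ae_bound ?_
    filter_upwards [h, hdiv] with a ha hiff using hiff.1 ha
  · intro h
    filter_upwards [enorm_ae_le_eLpNormEssSup (fun a => f a / u a) μ, hdiv] with a ha hiff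
    have := ha.trans h
    rwa [hiff, ← ENNReal.ofReal_le_ofReal_iff hl, ofReal_norm]

lemma ENNReal.sInf_setOf_pos_le_ofReal {c : ℝ≥0∞} (hc : c ≠ ∞) :
    sInf {l : ℝ | 0 < l ∧ c ≤ ENNReal.ofReal l} = c.toReal := by
  have hset : {l : ℝ | 0 < l ∧ c ≤ ENNReal.ofReal l} = Set.Ioi 0 ∩ Set.Ici c.toReal :=
    Set.ext fun l => and_congr_right fun hl => ENNReal.le_ofReal_iff_toReal_le hc hl.le
  rw [hset]
  rcases ENNReal.toReal_nonneg.eq_or_lt with h | h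
  · rw [← h, Set.inter_eq_left.2 Set.Ioi_subset_Ici_self, csInf_Ioi]
  · rw [Set.inter_eq_right.2 (Set.Ici_subset_Ioi.2 h), csInf_Ici]

theorem sInf_setOf_ae_abs_le_mul_eq_eLpNorm_div (hu : ∀ᵐ a ∂μ, 0 < u a)
    (hf : ∃ M > 0, ∀ᵐ a ∂μ, |f a| ≤ M * u a) :
    sInf {l : ℝ | 0 < l ∧ ∀ᵐ a ∂μ, |f a| ≤ l * u a} =
      (eLpNorm (fun a => f a / u a) ∞ μ).toReal := by
  obtain ⟨M, hM, hfM⟩ := hf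
  have hfin : eLpNorm (fun a => f a / u a) ∞ μ ≠ ∞ :=
    ne_top_of_le_ne_top ENNReal.ofReal_ne_top ((ae_abs_le_mul_iff_eLpNorm_div_le hu hM.le).1 hfM)
  rw [← ENNReal.sInf_setOf_pos_le_ofReal hfin]
  congr 1
  ext l
  exact and_congr_right fun hl => ae_abs_le_mul_iff_eLpNorm_div_le hu hl.le

lemma ae_abs_mul_le_lpNorm_mul {g : α → ℝ} (hg : MemLp g ∞ μ) (hu : ∀ᵐ a ∂μ, 0 ≤ u a) :
    ∀ᵐ a ∂μ, |g a * u a| ≤ lpNorm g ∞ μ * u a := by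
  filter_upwards [ae_le_lpNorm_exponent_top hg, hu] with a hga hua
  rw [abs_mul, abs_of_nonneg hua]
  exact mul_le_mul_of_nonneg_right hga hua

end Gauge

/-- For a σ-finite measure `μ` and `1 ≤ p < ∞`: (i) the nonsupport points of the
positive cone `L_p^+(μ)` are exactly the a.e. strictly positive functions, and there
is at least one; (ii) for `u > 0` a.e., on
`X_u = {f : ∃ M > 0, |f| ≤ M·u a.e.}` the gauge `‖f‖_u = inf{λ > 0 : |f| ≤ λ·u a.e.}`
equals `‖f/u‖_{L∞}`, and every `g ∈ L∞(μ)` gives `g·u ∈ L_p(μ)` represented by an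
element of `X_u`; consequently `f ↦ f/u` is a surjective linear isometry from
`(X_u, ‖·‖_u)` onto `L∞(μ)`. -/
theorem stmt_12 {α : Type*} [MeasurableSpace α] (μ : Measure α) [SigmaFinite μ]
    (p : ℝ≥0∞) [Fact (1 ≤ p)] (hp : p ≠ ∞) :
    ({f ∈ {g : Lp ℝ p μ | ∀ᵐ a ∂μ, 0 ≤ g a} |
        ¬ ∃ φ : Lp ℝ p μ →L[ℝ] ℝ, φ ≠ 0 ∧
          ∀ g ∈ {g : Lp ℝ p μ | ∀ᵐ a ∂μ, 0 ≤ g a}, φ g ≤ φ f} =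
      {f : Lp ℝ p μ | ∀ᵐ a ∂μ, 0 < f a}) ∧
    ({f : Lp ℝ p μ | ∀ᵐ a ∂μ, 0 < f a}.Nonempty) ∧
    (∀ u : Lp ℝ p μ, (∀ᵐ a ∂μ, 0 < u a) →
      (∀ f ∈ {f : Lp ℝ p μ | ∃ M > (0 : ℝ), ∀ᵐ a ∂μ, |f a| ≤ M * u a},
        sInf {l : ℝ | 0 < l ∧ ∀ᵐ a ∂μ, |f a| ≤ l * u a} =
          (eLpNorm (fun a => f a / u a) ∞ μ).toReal) ∧
      (∀ g : α → ℝ, MemLp g ∞ μ →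
        MemLp (fun a => g a * u a) p μ ∧
          ∃ f ∈ {f : Lp ℝ p μ | ∃ M > (0 : ℝ), ∀ᵐ a ∂μ, |f a| ≤ M * u a},
            (f : α → ℝ) =ᵐ[μ] fun a => g a * u a)) := by
  have hcone : {g : Lp ℝ p μ | ∀ᵐ a ∂μ, 0 ≤ g a} = Set.Ici 0 :=
    Set.ext fun g => Lp.coeFn_nonneg g
  have hp₀ : p ≠ 0 := (zero_lt_one.trans_le Fact.out).ne'
  refine ⟨?_, Lp.exists_ae_pos hp₀ hp, fun u hu =>
    ⟨fun f hf => sInf_setOf_ae_abs_le_mul_eq_eLpNorm_div hu hf, fun g hg => ?_⟩⟩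
  · rw [hcone]
    ext f
    refine ⟨fun ⟨hf, hns⟩ => ?_, fun hf => ⟨?_, Lp.not_isSupportPoint_of_ae_pos hp hf⟩⟩
    · by_contra hpos
      exact hns (Lp.isSupportPoint_of_not_ae_pos hf hpos)
    · exact (Lp.coeFn_nonneg f).1 (Filter.Eventually.mono hf fun _ h => h.le)
  · have hgu := (Lp.memLp u).mul' (r := p) hg
    refine ⟨hgu, hgu.toLp _,
      ⟨lpNorm g ∞ μ + 1, add_pos_of_nonneg_of_pos lpNorm_nonneg one_pos, ?_⟩, hgu.coeFn_toLp⟩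
    filter_upwards [hgu.coeFn_toLp, ae_abs_mul_le_lpNorm_mul hg (hu.mono fun _ h => h.le), hu]
      with a hga hbound hua
    rw [hga]
    exact hbound.trans (mul_le_mul_of_nonneg_right (le_add_of_nonneg_right zero_le_one) hua.le)
end

section
/- Let X and Y be real Banach spaces, Y^+ ⊆ Y a cone with vertex at the origin, Ω ⊆ X nonempty, and e a nonsupport point of Y^+. Set [−e,e] = {y ∈ Y : e − y ∈ Y^+ and e + y ∈ Y^+}, Y_e = ⋃_{λ>0} λ[−e,e], and Y_e^+ = Y^+ ∩ Y_e. Suppose g : X → Y is convex-like with respect to Y^+ on Ω, i.e., the set {g(x) + y : x ∈ Ω, y ∈ Y^+} is convex, and g is Y^+-Lipschitz on Ω with respect to e of some rank L > 0, i.e., g(y') + L‖x − y'‖e − g(x) ∈ Y^+ for all x, y' ∈ Ω. Then g is convex-like with respect to Y_e^+ on Ω: the set {g(x) + y : x ∈ Ω, y ∈ Y_e^+} is convex. -/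
open scoped Pointwise

/-- If `g : X → Y` is convex-like with respect to the ordering cone `Y⁺` on `Ω` and
`Y⁺`-Lipschitz on `Ω` with respect to a nonsupport point `e` of `Y⁺`, then `g` is also
convex-like with respect to `Y_e⁺ = Y⁺ ∩ Y_e` on `Ω`, where
`Y_e = ⋃_{λ>0} λ[−e,e]` and `[−e,e] = {y : e − y ∈ Y⁺ ∧ e + y ∈ Y⁺}`. -/
theorem stmt_17 {X Y : Type*} [NormedAddCommGroup X] [NormedSpace ℝ X]
    [NormedAddCommGroup Y] [NormedSpace ℝ Y] [CompleteSpace X] [CompleteSpace Y]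
    (Yp : Set Y) (hconv : Convex ℝ Yp)
    (hadd : ∀ y ∈ Yp, ∀ z ∈ Yp, y + z ∈ Yp)
    (hsmul : ∀ y ∈ Yp, ∀ r : ℝ, 0 ≤ r → r • y ∈ Yp)
    (e : Y) (he : e ∈ Yp)
    (hens : ¬ ∃ f : Y →L[ℝ] ℝ, f ≠ 0 ∧ ∀ y ∈ Yp, f y ≤ f e)
    (Ω : Set X) (hΩ : Ω.Nonempty)
    (g : X → Y) (L : ℝ) (hL : 0 < L)
    (hconvlike : Convex ℝ {z : Y | ∃ x ∈ Ω, ∃ y ∈ Yp, z = g x + y})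
    (hlip : ∀ x ∈ Ω, ∀ x' ∈ Ω, g x' + (L * ‖x - x'‖) • e - g x ∈ Yp) :
    Convex ℝ {z : Y | ∃ x ∈ Ω,
      ∃ y ∈ Yp ∩ ⋃ (l : ℝ) (_ : 0 < l), l • {w : Y | e - w ∈ Yp ∧ e + w ∈ Yp},
        z = g x + y} := by
  rintro z1 ⟨x1, hx1, y1, ⟨hy1p, hy1u⟩, rfl⟩ z2 ⟨x2, hx2, y2, ⟨hy2p, hy2u⟩, rfl⟩ a b ha hb hab
  simp only [Set.mem_iUnion, Set.mem_smul_set, Set.mem_setOf_eq] at hy1u hy2u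
  obtain ⟨l1, hl1, w1, ⟨hw1a, hw1b⟩, hw1⟩ := hy1u
  obtain ⟨l2, hl2, w2, ⟨hw2a, hw2b⟩, hw2⟩ := hy2u
  -- cone facts about y1, y2
  have h1m : l1 • e - y1 ∈ Yp := by
    rw [← hw1, ← smul_sub]; exact hsmul _ hw1a l1 hl1.le
  have h1p : l1 • e + y1 ∈ Yp := by
    rw [← hw1, ← smul_add]; exact hsmul _ hw1b l1 hl1.le
  have h2m : l2 • e - y2 ∈ Yp := by
    rw [← hw2, ← smul_sub]; exact hsmul _ hw2a l2 hl2.le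
  have h2p : l2 • e + y2 ∈ Yp := by
    rw [← hw2, ← smul_add]; exact hsmul _ hw2b l2 hl2.le
  -- convex-like w.r.t. Yp
  have hmem : a • (g x1 + y1) + b • (g x2 + y2) ∈
      {z : Y | ∃ x ∈ Ω, ∃ y ∈ Yp, z = g x + y} :=
    hconvlike ⟨x1, hx1, y1, hy1p, rfl⟩ ⟨x2, hx2, y2, hy2p, rfl⟩ ha hb hab
  obtain ⟨x, hx, y, hyp, hy⟩ := hmem
  have hy' : y = a • (g x1 + y1) + b • (g x2 + y2) - g x := by rw [hy]; abel
  obtain rfl : b = 1 - a := by linarith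
  set μ : ℝ := a * l1 + (1 - a) * l2 + L * (a * ‖x - x1‖ + (1 - a) * ‖x - x2‖) with hμ
  have hμpos : 0 < μ := by
    have h1 : 0 ≤ a * ‖x - x1‖ + (1 - a) * ‖x - x2‖ := by positivity
    have h2 : 0 < a * l1 + (1 - a) * l2 := by
      rcases eq_or_lt_of_le ha with h | h
      · nlinarith
      · nlinarith [mul_pos h hl1, mul_nonneg hb hl2.le]
    nlinarith [mul_nonneg hL.le h1]
  have hplus : μ • e + y ∈ Yp := by
    have key : μ • e + y = a • (l1 • e + y1) + (1 - a) • (l2 • e + y2) +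
        (a • (g x1 + (L * ‖x - x1‖) • e - g x) +
         (1 - a) • (g x2 + (L * ‖x - x2‖) • e - g x)) := by
      rw [hy', hμ]; module
    rw [key]
    exact hadd _ (hadd _ (hsmul _ (hadd _ (hsmul e he l1 hl1.le) _ hy1p) a ha)
        _ (hsmul _ (hadd _ (hsmul e he l2 hl2.le) _ hy2p) _ hb))
      _ (hadd _ (hsmul _ (hlip x hx x1 hx1) a ha) _ (hsmul _ (hlip x hx x2 hx2) _ hb))
  have hminus : μ • e - y ∈ Yp := by
    have key : μ • e - y = a • (l1 • e - y1) + (1 - a) • (l2 • e - y2) +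
        (a • (g x + (L * ‖x1 - x‖) • e - g x1) +
         (1 - a) • (g x + (L * ‖x2 - x‖) • e - g x2)) := by
      rw [hy', hμ, norm_sub_rev x x1, norm_sub_rev x x2]; module
    rw [key]
    exact hadd _ (hadd _ (hsmul _ h1m a ha) _ (hsmul _ h2m _ hb))
      _ (hadd _ (hsmul _ (hlip x1 hx1 x hx) a ha) _ (hsmul _ (hlip x2 hx2 x hx) _ hb))
  refine ⟨x, hx, y, ⟨hyp, ?_⟩, hy⟩
  refine Set.mem_iUnion.2 ⟨μ, Set.mem_iUnion.2 ⟨hμpos, ?_⟩⟩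
  rw [Set.mem_smul_set]
  refine ⟨μ⁻¹ • y, ⟨?_, ?_⟩, smul_inv_smul₀ hμpos.ne' y⟩
  · have : e - μ⁻¹ • y = μ⁻¹ • (μ • e - y) := by
      rw [smul_sub, inv_smul_smul₀ hμpos.ne']
    rw [this]; exact hsmul _ hminus _ (by positivity)
  · have : e + μ⁻¹ • y = μ⁻¹ • (μ • e + y) := by
      rw [smul_add, inv_smul_smul₀ hμpos.ne']
    rw [this]; exact hsmul _ hplus _ (by positivity)
end
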